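/- For the Lie algebra g with basis X1,...,X_{2l+2k} and brackets [X_{2l+2i}, X_{2j-1}] = -X_{2j}, [X_{2l+2i}, X_{2j}] = X_{2j-1}, the linear map J defined by J X_{2j-1} = X_{2j}, J X_{2j} = -X_{2j-1} (1 ≤ j ≤ l) and J X_{2l+2i-1} = X_{2l+2i}, J X_{2l+2i} = -X_{2l+2i-1} (1 ≤ i ≤ k) is an integrable almost complex structure (vanishing Nijenhuis tensor). -/

import Mathlib

/-!
Let `V` be the span of `X_1, …, X_{2l}` and `W` the span of `X_{2l+1}, …, X_{2l+2k}`. Both are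
`J`-invariant abelian subalgebras with `g = V ⊕ W`, and `ad X_{2l+2i}` acts on `V` as `-J`, so
every `ad w` with `w ∈ W` commutes with `J` on `V`. The Nijenhuis tensor is skew and bilinear,
so it suffices to evaluate it on `V × V`, `W × W` and `W × V`. On the first two all four
brackets vanish; on `W × V` the commutation gives `⁅J w, J v⁆ = J ⁅J w, v⁆` and
`J ⁅w, J v⁆ = J² ⁅w, v⁆ = -⁅w, v⁆`, so the four terms cancel in pairs.
-/

open Submodule

lemma LinearMap.BilinMap.apply_apply_eq_of_mem_span {R M N P : Type*} [CommRing R]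
    [AddCommGroup M] [AddCommGroup N] [AddCommGroup P] [Module R M] [Module R N] [Module R P]
    {s : Set M} {t : Set N} {B B' : M →ₗ[R] N →ₗ[R] P}
    (h : ∀ x ∈ s, ∀ y ∈ t, B x y = B' x y) {x : M} {y : N}
    (hx : x ∈ span R s) (hy : y ∈ span R t) : B x y = B' x y := by
  have := LinearMap.BilinMap.apply_apply_mem_of_mem_span ⊥ s t (B - B')
    (fun x hx y hy ↦ by simp [h x hx y hy]) x y hx hy
  simpa [sub_eq_zero] using this

lemma Module.Basis.span_range_inl_sup_span_range_inr {ι κ R M : Type*} [Semiring R]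
    [AddCommMonoid M] [Module R M] (b : Module.Basis (ι ⊕ κ) R M) :
    span R (Set.range (b ∘ Sum.inl)) ⊔ span R (Set.range (b ∘ Sum.inr)) = ⊤ := by
  rw [← span_union, ← Sum.range_eq, b.span_eq]

section LieAlgebra

variable {R L : Type*} [CommRing R] [LieRing L] [LieAlgebra R L] {J : L →ₗ[R] L}

lemma lie_eq_zero_of_mem_span {s : Set L} (h : ∀ x ∈ s, ∀ y ∈ s, ⁅x, y⁆ = 0) {x y : L}
    (hx : x ∈ span R s) (hy : y ∈ span R s) : ⁅x, y⁆ = 0 :=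
  LinearMap.BilinMap.apply_apply_eq_of_mem_span (B := (LieAlgebra.ad R L : L →ₗ[R] L →ₗ[R] L))
    (B' := 0) h hx hy

lemma lie_map_eq_map_lie_of_mem_span {s t : Set L} (h : ∀ x ∈ s, ∀ y ∈ t, ⁅x, J y⁆ = J ⁅x, y⁆)
    {x y : L} (hx : x ∈ span R s) (hy : y ∈ span R t) : ⁅x, J y⁆ = J ⁅x, y⁆ :=
  LinearMap.BilinMap.apply_apply_eq_of_mem_span
    (B := (LieAlgebra.ad R L : L →ₗ[R] L →ₗ[R] L).compl₂ J)
    (B' := (LieAlgebra.ad R L : L →ₗ[R] L →ₗ[R] L).compr₂ J) h hx hy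

variable (J) in
def nijenhuis : L →ₗ[R] L →ₗ[R] L :=
  let ad : L →ₗ[R] L →ₗ[R] L := LieAlgebra.ad R L
  ad.compl₁₂ J J - (ad.compl₁₂ J LinearMap.id).compr₂ J - (ad.compl₂ J).compr₂ J - ad

@[simp]
lemma nijenhuis_apply (X Y : L) :
    nijenhuis J X Y = ⁅J X, J Y⁆ - J ⁅J X, Y⁆ - J ⁅X, J Y⁆ - ⁅X, Y⁆ := by
  simp [nijenhuis]

lemma nijenhuis_swap (X Y : L) : nijenhuis J X Y = -nijenhuis J Y X := by
  simp only [nijenhuis_apply, ← lie_skew Y, ← lie_skew (J Y), map_neg]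
  abel

lemma nijenhuis_apply_eq_zero_of_mem_abelian {V : Submodule R L} (hJV : V.map J ≤ V)
    (hV : ∀ v ∈ V, ∀ v' ∈ V, ⁅v, v'⁆ = 0) {X Y : L} (hX : X ∈ V) (hY : Y ∈ V) :
    nijenhuis J X Y = 0 := by
  have hJ : ∀ {v}, v ∈ V → J v ∈ V := fun hv ↦ hJV (mem_map_of_mem hv)
  simp [hV _ (hJ hX) _ (hJ hY), hV _ (hJ hX) _ hY, hV _ hX _ (hJ hY), hV _ hX _ hY]

lemma nijenhuis_apply_eq_zero_of_lie_comm (hJJ : ∀ X, J (J X) = -X) {X Y : L}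
    (hX : ⁅X, J Y⁆ = J ⁅X, Y⁆) (hJX : ⁅J X, J Y⁆ = J ⁅J X, Y⁆) :
    nijenhuis J X Y = 0 := by
  simp [hX, hJX, hJJ]

theorem nijenhuis_eq_zero_of_sup_eq_top (hJJ : ∀ X, J (J X) = -X) {V W : Submodule R L}
    (hVW : V ⊔ W = ⊤) (hJV : V.map J ≤ V) (hJW : W.map J ≤ W)
    (hV : ∀ v ∈ V, ∀ v' ∈ V, ⁅v, v'⁆ = 0) (hW : ∀ w ∈ W, ∀ w' ∈ W, ⁅w, w'⁆ = 0)
    (hWV : ∀ w ∈ W, ∀ v ∈ V, ⁅w, J v⁆ = J ⁅w, v⁆) :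
    nijenhuis J = 0 := by
  have hNWV : ∀ w ∈ W, ∀ v ∈ V, nijenhuis J w v = 0 := fun w hw v hv ↦
    nijenhuis_apply_eq_zero_of_lie_comm hJJ (hWV w hw v hv)
      (hWV _ (hJW (mem_map_of_mem hw)) v hv)
  have hgen : ∀ X ∈ (V : Set L) ∪ W, ∀ Y ∈ (V : Set L) ∪ W, nijenhuis J X Y = 0 := by
    rintro X (hX | hX) Y (hY | hY)
    · exact nijenhuis_apply_eq_zero_of_mem_abelian hJV hV hX hY
    · rw [nijenhuis_swap, hNWV Y hY X hX, neg_zero]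
    · exact hNWV X hX Y hY
    · exact nijenhuis_apply_eq_zero_of_mem_abelian hJW hW hX hY
  have hspan : span R ((V : Set L) ∪ W) = ⊤ := by rw [span_union, span_eq, span_eq, hVW]
  ext X Y
  exact LinearMap.BilinMap.apply_apply_eq_of_mem_span (B' := 0) hgen
    (hspan ▸ mem_top) (hspan ▸ mem_top)

end LieAlgebra

theorem rigid_type_canonical_complex_structure_integrable_general
    (k l : ℕ)
    (g : Type*) [LieRing g] [LieAlgebra ℝ g]
    (b : Module.Basis ((Fin l × Fin 2) ⊕ (Fin k × Fin 2)) ℝ g)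
    (hnz1 : ∀ (i : Fin k) (j : Fin l),
      ⁅b (Sum.inr (i, 1)), b (Sum.inl (j, 0))⁆ = -(b (Sum.inl (j, 1))))
    (hnz2 : ∀ (i : Fin k) (j : Fin l),
      ⁅b (Sum.inr (i, 1)), b (Sum.inl (j, 1))⁆ = b (Sum.inl (j, 0)))
    (hz1 : ∀ p q : Fin l × Fin 2, ⁅b (Sum.inl p), b (Sum.inl q)⁆ = 0)
    (hz2 : ∀ p q : Fin k × Fin 2, ⁅b (Sum.inr p), b (Sum.inr q)⁆ = 0)
    (hz3 : ∀ (i : Fin k) (p : Fin l × Fin 2),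
      ⁅b (Sum.inr (i, 0)), b (Sum.inl p)⁆ = 0)
    (J : g →ₗ[ℝ] g)
    (hJ1 : ∀ j : Fin l, J (b (Sum.inl (j, 0))) = b (Sum.inl (j, 1)))
    (hJ2 : ∀ j : Fin l, J (b (Sum.inl (j, 1))) = -(b (Sum.inl (j, 0))))
    (hJ3 : ∀ i : Fin k, J (b (Sum.inr (i, 0))) = b (Sum.inr (i, 1)))
    (hJ4 : ∀ i : Fin k, J (b (Sum.inr (i, 1))) = -(b (Sum.inr (i, 0)))) :
    (∀ X : g, J (J X) = -X) ∧
      ∀ X Y : g, ⁅J X, J Y⁆ - J ⁅J X, Y⁆ - J ⁅X, J Y⁆ - ⁅X, Y⁆ = 0 := by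
  have hJJ : ∀ X, J (J X) = -X := by
    have : J ∘ₗ J = -LinearMap.id := b.ext <| by
      rintro (⟨j, e⟩ | ⟨i, e⟩) <;> fin_cases e <;> simp [hJ1, hJ2, hJ3, hJ4]
    exact LinearMap.congr_fun this
  set V := span ℝ (Set.range (b ∘ Sum.inl))
  set W := span ℝ (Set.range (b ∘ Sum.inr))
  have hJV : V.map J ≤ V := (map_span_le _ _ _).2 <| by
    simp only [Set.forall_mem_range, Function.comp_apply, Prod.forall, Fin.forall_fin_two, hJ1, hJ2]
    exact fun j ↦ ⟨subset_span ⟨(j, 1), rfl⟩, neg_mem (subset_span ⟨(j, 0), rfl⟩)⟩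
  have hJW : W.map J ≤ W := (map_span_le _ _ _).2 <| by
    simp only [Set.forall_mem_range, Function.comp_apply, Prod.forall, Fin.forall_fin_two, hJ3, hJ4]
    exact fun i ↦ ⟨subset_span ⟨(i, 1), rfl⟩, neg_mem (subset_span ⟨(i, 0), rfl⟩)⟩
  have hV : ∀ v ∈ V, ∀ v' ∈ V, ⁅v, v'⁆ = 0 := fun v hv v' hv' ↦
    lie_eq_zero_of_mem_span (by simp only [Set.forall_mem_range]; exact hz1) hv hv'
  have hW : ∀ w ∈ W, ∀ w' ∈ W, ⁅w, w'⁆ = 0 := fun w hw w' hw' ↦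
    lie_eq_zero_of_mem_span (by simp only [Set.forall_mem_range]; exact hz2) hw hw'
  have hWV : ∀ w ∈ W, ∀ v ∈ V, ⁅w, J v⁆ = J ⁅w, v⁆ := fun w hw v hv ↦
    lie_map_eq_map_lie_of_mem_span (by
      simp only [Set.forall_mem_range, Function.comp_apply, Prod.forall, Fin.forall_fin_two]
      simp [hz3, hJ1, hJ2, hnz1, hnz2]) hw hv
  have hN := nijenhuis_eq_zero_of_sup_eq_top hJJ b.span_range_inl_sup_span_range_inr
    hJV hJW hV hW hWV
  exact ⟨hJJ, fun X Y ↦ by simpa using LinearMap.congr_fun₂ hN X Y⟩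

/-- For the Lie algebra `g` of Example 3 (basis indexed by
`(Fin l × Fin 2) ⊕ (Fin k × Fin 2)` with `inl (j,0) = X_{2j-1}`, `inl (j,1) = X_{2j}`,
`inr (i,0) = X_{2l+2i-1}`, `inr (i,1) = X_{2l+2i}`, and nonzero brackets
`⁅X_{2l+2i}, X_{2j-1}⁆ = -X_{2j}`, `⁅X_{2l+2i}, X_{2j}⁆ = X_{2j-1}`), the linear map
`J` with `J X_{2j-1} = X_{2j}`, `J X_{2j} = -X_{2j-1}`, `J X_{2l+2i-1} = X_{2l+2i}`,
`J X_{2l+2i} = -X_{2l+2i-1}` satisfies `J² = -id` and has vanishing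
Nijenhuis tensor. -/
theorem rigid_type_canonical_complex_structure_integrable
    (k l : ℕ) (hk : 1 ≤ k) (hl : 1 ≤ l)
    (g : Type*) [LieRing g] [LieAlgebra ℝ g] [Module.Finite ℝ g]
    (b : Module.Basis ((Fin l × Fin 2) ⊕ (Fin k × Fin 2)) ℝ g)
    (hnz1 : ∀ (i : Fin k) (j : Fin l),
      ⁅b (Sum.inr (i, 1)), b (Sum.inl (j, 0))⁆ = -(b (Sum.inl (j, 1))))
    (hnz2 : ∀ (i : Fin k) (j : Fin l),
      ⁅b (Sum.inr (i, 1)), b (Sum.inl (j, 1))⁆ = b (Sum.inl (j, 0)))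
    (hz1 : ∀ p q : Fin l × Fin 2, ⁅b (Sum.inl p), b (Sum.inl q)⁆ = 0)
    (hz2 : ∀ p q : Fin k × Fin 2, ⁅b (Sum.inr p), b (Sum.inr q)⁆ = 0)
    (hz3 : ∀ (i : Fin k) (p : Fin l × Fin 2),
      ⁅b (Sum.inr (i, 0)), b (Sum.inl p)⁆ = 0)
    (J : g →ₗ[ℝ] g)
    (hJ1 : ∀ j : Fin l, J (b (Sum.inl (j, 0))) = b (Sum.inl (j, 1)))
    (hJ2 : ∀ j : Fin l, J (b (Sum.inl (j, 1))) = -(b (Sum.inl (j, 0))))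
    (hJ3 : ∀ i : Fin k, J (b (Sum.inr (i, 0))) = b (Sum.inr (i, 1)))
    (hJ4 : ∀ i : Fin k, J (b (Sum.inr (i, 1))) = -(b (Sum.inr (i, 0)))) :
    (∀ X : g, J (J X) = -X) ∧
      ∀ X Y : g, ⁅J X, J Y⁆ - J ⁅J X, Y⁆ - J ⁅X, J Y⁆ - ⁅X, Y⁆ = 0 :=
  rigid_type_canonical_complex_structure_integrable_general k l g b hnz1 hnz2 hz1 hz2 hz3 J hJ1 hJ2
    hJ3 hJ4
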